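/- arXiv:2103.16303 — 2 statements merged into one kernel-verified Lean document; each statement's English description precedes it below -/
import Mathlib

section
/- Let α : [0,∞) → [0,∞) be continuous and set p(a) = exp(−∫_0^a α(u) du); assume 0 < ∫_0^∞ p(a) da < ∞. Let μ be a finite Borel measure on [0,∞) with ∫_0^∞ α(a) μ(da) < ∞, and suppose that for every bounded continuously differentiable function f : [0,∞) → ℝ with bounded derivative and f(0) = 0 one has ∫_0^∞ (f'(a) − α(a) f(a)) μ(da) = 0. Then μ has density proportional to p with respect to Lebesgue measure: for every Borel set A ⊆ [0,∞), μ(A) = μ([0,∞)) · (∫_A p(a) da) / (∫_0^∞ p(a) da). -/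
open MeasureTheory Real

open Set

lemma abs_mul_exp_le_one {a : ℝ} (ha : a ≤ 0) : |a * Real.exp a| ≤ 1 := by
  rw [abs_mul, Real.abs_exp]
  have h1 : |a| = -a := abs_of_nonpos ha
  have h3 : Real.exp (-a) * Real.exp a = 1 := by rw [← Real.exp_add]; simp
  nlinarith [Real.exp_pos a, Real.exp_pos (-a), Real.add_one_le_exp (-a)]

lemma abs_one_add_mul_exp_le_one {a : ℝ} (ha : a ≤ 0) : |(1 + a) * Real.exp a| ≤ 1 := by
  rcases le_or_gt (-1) a with h | h
  · have h1 : |(1 + a)| = 1 + a := abs_of_nonneg (by linarith)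
    have h2 : 1 + a ≤ Real.exp a := by have := Real.add_one_le_exp a; linarith
    rw [abs_mul, Real.abs_exp, h1]
    have h3 : Real.exp a * Real.exp a = Real.exp (2*a) := by rw [← Real.exp_add]; ring_nf
    have h4 : Real.exp (2*a) ≤ 1 := Real.exp_le_one_iff.2 (by linarith)
    nlinarith [Real.exp_pos a]
  · have h1 : |(1 + a)| = -(1+a) := abs_of_nonpos (by linarith)
    rw [abs_mul, Real.abs_exp, h1]
    have := abs_mul_exp_le_one ha
    rw [abs_mul, Real.abs_exp, abs_of_nonpos ha] at this
    nlinarith [Real.exp_pos a]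

/-- Master lemma: testing against the solution of the Poisson equation. -/
lemma master_test
    (α : ℝ → ℝ) (hα_cont : ContinuousOn α (Set.Ici 0))
    (p : ℝ → ℝ) (hp : ∀ a, p a = Real.exp (-∫ u in (0:ℝ)..a, α u))
    (μ : Measure ℝ) [IsFiniteMeasure μ] (hsupp : μ (Set.Iio 0) = 0)
    (htest : ∀ f : ℝ → ℝ, ContDiff ℝ 1 f →
        (∃ C, ∀ a, |f a| ≤ C) → (∃ C, ∀ a, |deriv f a| ≤ C) → f 0 = 0 →
        ∫ a, (deriv f a - α a * f a) ∂μ = 0)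
    (g : ℝ → ℝ) (hg_cont : ContinuousOn g (Set.Ici 0))
    (hg_neg : ∀ a < (0:ℝ), g a = 0) (T : ℝ) (hT : 0 < T) (hgT : ∀ a ≥ T, g a = 0)
    (hzero : ∫ a in Set.Ioi (0:ℝ), p a * g a = 0) :
    ∫ a, g a ∂μ = 0 := by
  set q : ℝ → ℝ := fun a => ∫ u in (0:ℝ)..a, α u with hq_def
  have hα_contIoi : ContinuousOn α (Ioi 0) := hα_cont.mono Ioi_subset_Ici_self
  have hg_contIoi : ContinuousOn g (Ioi 0) := hg_cont.mono Ioi_subset_Ici_self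
  have hαii : ∀ a : ℝ, 0 ≤ a → IntervalIntegrable α volume 0 a := by
    intro a ha
    apply ContinuousOn.intervalIntegrable
    apply hα_cont.mono
    rw [Set.uIcc_of_le ha]
    exact fun x hx => hx.1
  have hq0 : q 0 = 0 := intervalIntegral.integral_same
  have hqd : ∀ a : ℝ, 0 < a → HasDerivAt q (α a) a := by
    intro a ha
    exact intervalIntegral.integral_hasDerivAt_right (hαii a ha.le)
      (hα_contIoi.stronglyMeasurableAtFilter isOpen_Ioi a ha)
      (hα_cont.continuousAt (Ici_mem_nhds ha))
  have hqd0 : HasDerivWithinAt q (α 0) (Ici (0:ℝ)) 0 := by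
    exact intervalIntegral.integral_hasDerivWithinAt_right (IntervalIntegrable.refl)
      (hα_contIoi.stronglyMeasurableAtFilter_nhdsWithin measurableSet_Ioi 0)
      ((hα_cont 0 Set.self_mem_Ici).mono Ioi_subset_Ici_self)
  have hq_cont : ContinuousOn q (Ici 0) := by
    intro a ha
    rcases eq_or_lt_of_le (Set.mem_Ici.1 ha) with rfl | h
    · exact hqd0.continuousWithinAt
    · exact ((hqd a h).continuousAt).continuousWithinAt
  have hp_eq : p = fun a => Real.exp (-q a) := funext hp
  have hp_cont : ContinuousOn p (Ici 0) := by
    rw [hp_eq]; exact (Real.continuous_exp.comp_continuousOn hq_cont.neg)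
  have hp_pos : ∀ a, 0 < p a := fun a => by rw [hp a]; exact Real.exp_pos _
  have hpg_cont : ContinuousOn (fun u => p u * g u) (Ici 0) := hp_cont.mul hg_cont
  have hpg_contIoi : ContinuousOn (fun u => p u * g u) (Ioi 0) :=
    hpg_cont.mono Ioi_subset_Ici_self
  have hpgii : ∀ a b : ℝ, 0 ≤ a → a ≤ b → IntervalIntegrable (fun u => p u * g u) volume a b := by
    intro a b ha hab
    apply ContinuousOn.intervalIntegrable
    apply hpg_cont.mono
    rw [Set.uIcc_of_le hab]
    exact fun x hx => le_trans ha hx.1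
  set H : ℝ → ℝ := fun a => ∫ u in (0:ℝ)..a, p u * g u with hH_def
  have hH0 : H 0 = 0 := intervalIntegral.integral_same
  have hHd : ∀ a : ℝ, 0 < a → HasDerivAt H (p a * g a) a := by
    intro a ha
    exact intervalIntegral.integral_hasDerivAt_right (hpgii 0 a le_rfl ha.le)
      (hpg_contIoi.stronglyMeasurableAtFilter isOpen_Ioi a ha)
      (hpg_cont.continuousAt (Ici_mem_nhds ha))
  have hHd0 : HasDerivWithinAt H (p 0 * g 0) (Ici (0:ℝ)) 0 := by
    exact intervalIntegral.integral_hasDerivWithinAt_right (IntervalIntegrable.refl)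
      (hpg_contIoi.stronglyMeasurableAtFilter_nhdsWithin measurableSet_Ioi 0)
      ((hpg_cont 0 Set.self_mem_Ici).mono Ioi_subset_Ici_self)
  have hH_cont : ContinuousOn H (Ici 0) := by
    intro a ha
    rcases eq_or_lt_of_le (Set.mem_Ici.1 ha) with rfl | h
    · exact hHd0.continuousWithinAt
    · exact ((hHd a h).continuousAt).continuousWithinAt
  have hne : ∀ᵐ u : ℝ ∂volume, u ≠ 0 := by
    rw [MeasureTheory.ae_iff]
    have : {u : ℝ | ¬u ≠ 0} = {0} := by ext u; simp
    rw [this]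
    exact measure_singleton 0
  have hHneg : ∀ a : ℝ, a ≤ 0 → H a = 0 := by
    intro a ha
    have h1 : ∀ᵐ u ∂volume, u ∈ Set.uIoc 0 a → p u * g u = (0:ℝ) := by
      filter_upwards [hne] with u hu hmem
      rcases Set.mem_uIoc.1 hmem with h | h
      · linarith [h.1, h.2]
      · exact mul_eq_zero_of_right _ (hg_neg u (lt_of_le_of_ne h.2 hu))
    have := intervalIntegral.integral_congr_ae h1
    simpa using this
  have hHT : ∀ a : ℝ, T ≤ a → H a = H T := by
    intro a ha
    have h2 : (∫ u in T..a, p u * g u) = 0 := by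
      rw [intervalIntegral.integral_congr (g := fun _ => (0:ℝ))]
      · simp
      · intro u hu
        rw [Set.uIcc_of_le ha] at hu
        exact mul_eq_zero_of_right _ (hgT u (le_trans hu.1 le_rfl))
    have h3 := intervalIntegral.integral_add_adjacent_intervals
      (hpgii 0 T le_rfl hT.le) (hpgii T a hT.le ha)
    show (∫ u in (0:ℝ)..a, p u * g u) = _
    rw [← h3, h2, add_zero]
  have hIOn : IntegrableOn (fun u => p u * g u) (Set.Ioc 0 T) volume := by
    exact (ContinuousOn.integrableOn_Icc (hpg_cont.mono (by
      intro x hx; exact hx.1))).mono_set Set.Ioc_subset_Icc_self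
  have hHTval : H T = 0 := by
    have hion : IntegrableOn (fun u => p u * g u) (Set.Ioi T) volume := by
      apply (integrableOn_zero (μ := volume) (s := Set.Ioi T)).congr_fun _ measurableSet_Ioi
      intro x hx
      exact (mul_eq_zero_of_right _ (hgT x (le_of_lt hx))).symm
    have hsplit : (∫ a in Set.Ioi (0:ℝ), p a * g a)
        = (∫ a in Set.Ioc 0 T, p a * g a) + ∫ a in Set.Ioi T, p a * g a := by
      rw [← MeasureTheory.setIntegral_union (Set.Ioc_disjoint_Ioi le_rfl) measurableSet_Ioi
        hIOn hion, Set.Ioc_union_Ioi_eq_Ioi hT.le]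
    have hz2 : (∫ a in Set.Ioi T, p a * g a) = 0 :=
      setIntegral_eq_zero_of_forall_eq_zero fun x hx =>
        mul_eq_zero_of_right _ (hgT x (le_of_lt hx))
    have : (∫ a in Set.Ioc 0 T, p a * g a) = 0 := by
      rw [hsplit, hz2, add_zero] at hzero; exact hzero
    rw [hH_def]
    show (∫ u in (0:ℝ)..T, p u * g u) = 0
    rw [intervalIntegral.integral_of_le hT.le]
    exact this
  have hHT0 : ∀ a : ℝ, T ≤ a → H a = 0 := fun a ha => (hHT a ha).trans hHTval
  set F : ℝ → ℝ := fun a => Real.exp (q a) * H a with hF_def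
  have hF0 : F 0 = 0 := by simp [hF_def, hH0]
  have hFT : ∀ a : ℝ, T ≤ a → F a = 0 := fun a ha => by simp [hF_def, hHT0 a ha]
  have hexpq_p : ∀ a, Real.exp (q a) * p a = 1 := by
    intro a
    rw [hp a, ← Real.exp_add]
    simp [hq_def]
  have hFd : ∀ a : ℝ, 0 < a → HasDerivAt F (α a * F a + g a) a := by
    intro a ha
    have h1 : HasDerivAt (fun x => Real.exp (q x)) (Real.exp (q a) * α a) a := by
      simpa using (hqd a ha).exp
    have h2 := h1.mul (hHd a ha)
    have h3 : Real.exp (q a) * α a * H a + Real.exp (q a) * (p a * g a)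
        = α a * F a + g a := by
      simp only [hF_def]
      linear_combination g a * hexpq_p a
    rw [h3] at h2
    exact h2
  have hFd0 : HasDerivWithinAt F (g 0) (Ici (0:ℝ)) 0 := by
    have h1 : HasDerivWithinAt (fun x => Real.exp (q x)) (Real.exp (q 0) * α 0) (Ici 0) 0 := by
      simpa using hqd0.exp
    have h2 := h1.mul hHd0
    have h3 : Real.exp (q 0) * α 0 * H 0 + Real.exp (q 0) * (p 0 * g 0) = g 0 := by
      rw [hH0]
      linear_combination g 0 * hexpq_p 0
    rw [h3] at h2
    exact h2
  have hF_cont : ContinuousOn F (Ici 0) :=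
    (Real.continuous_exp.comp_continuousOn hq_cont).mul hH_cont
  -- the glued test function
  set f : ℝ → ℝ := fun a => if a < 0 then g 0 * (a * Real.exp a) else F a with hf_def
  set D : ℝ → ℝ := fun a => if a < 0 then g 0 * ((1 + a) * Real.exp a)
      else α a * F a + g a with hD_def
  have hf0 : f 0 = 0 := by simp [hf_def, hF0]
  have hLd : ∀ a : ℝ, HasDerivAt (fun x => g 0 * (x * Real.exp x))
      (g 0 * ((1 + a) * Real.exp a)) a := by
    intro a
    have h1 : HasDerivAt (fun x : ℝ => x * Real.exp x)
        (1 * Real.exp a + a * Real.exp a) a :=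
      (hasDerivAt_id a).mul (Real.hasDerivAt_exp a)
    have := h1.const_mul (g 0)
    rw [show g 0 * ((1 + a) * Real.exp a) = g 0 * (1 * Real.exp a + a * Real.exp a) by ring]
    exact this
  have hfd : ∀ a : ℝ, HasDerivAt f (D a) a := by
    intro a
    rcases lt_trichotomy a 0 with ha | rfl | ha
    · have heq : f =ᶠ[nhds a] (fun x => g 0 * (x * Real.exp x)) := by
        filter_upwards [Iio_mem_nhds ha] with x hx
        simp only [hf_def]
        rw [if_pos (Set.mem_Iio.1 hx)]
      have : D a = g 0 * ((1 + a) * Real.exp a) := if_pos ha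
      rw [this]
      exact (hLd a).congr_of_eventuallyEq heq
    · have h0 : HasDerivAt (fun x => g 0 * (x * Real.exp x)) (g 0) 0 := by
        have := hLd 0
        simpa using this
      have h1 : HasDerivWithinAt f (g 0) (Iic 0) 0 := by
        apply h0.hasDerivWithinAt.congr
        · intro x hx
          rcases (Set.mem_Iic.1 hx).lt_or_eq with h | rfl
          · simp only [hf_def]; rw [if_pos h]
          · simp [hf_def, hF0]
        · simp [hf_def, hF0]
      have h2 : HasDerivWithinAt f (g 0) (Ici 0) 0 := by
        apply hFd0.congr
        · intro x hx
          simp [hf_def, if_neg (not_lt.2 (Set.mem_Ici.1 hx))]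
        · simp [hf_def, hF0]
      have h3 := h1.union h2
      rw [Set.Iic_union_Ici] at h3
      have h4 : D 0 = g 0 := by simp [hD_def, hF0]
      rw [h4]
      exact hasDerivWithinAt_univ.mp h3
    · have heq : f =ᶠ[nhds a] F := by
        filter_upwards [Ioi_mem_nhds ha] with x hx
        simp only [hf_def]
        rw [if_neg (not_lt.2 (le_of_lt (Set.mem_Ioi.1 hx)))]
      have : D a = α a * F a + g a := if_neg (not_lt.2 ha.le)
      rw [this]
      exact (hFd a ha).congr_of_eventuallyEq heq
  have hdf : deriv f = D := funext fun a => (hfd a).deriv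
  have hD0 : D 0 = g 0 := by simp [hD_def, hF0]
  have hD_cont : Continuous D := by
    rw [continuous_iff_continuousAt]
    intro a
    rcases lt_trichotomy a 0 with ha | rfl | ha
    · have heq : D =ᶠ[nhds a] (fun x => g 0 * ((1 + x) * Real.exp x)) := by
        filter_upwards [Iio_mem_nhds ha] with x hx
        simp only [hD_def]
        rw [if_pos (Set.mem_Iio.1 hx)]
      rw [continuousAt_congr heq]
      fun_prop
    · have c1 : ContinuousWithinAt D (Iio 0) 0 := by
        apply ContinuousWithinAt.congr (f := fun x => g 0 * ((1 + x) * Real.exp x))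
        · exact (by fun_prop : Continuous fun x : ℝ => g 0 * ((1 + x) * Real.exp x)).continuousWithinAt
        · intro x hx
          simp only [hD_def]
          rw [if_pos (Set.mem_Iio.1 hx)]
        · simp [hD0]
      have c2 : ContinuousWithinAt D (Ici 0) 0 := by
        apply ContinuousWithinAt.congr
          (f := fun x => α x * F x + g x)
        · exact (((hα_cont 0 Set.self_mem_Ici).mul
            (hF_cont 0 Set.self_mem_Ici)).add (hg_cont 0 Set.self_mem_Ici))
        · intro x hx
          simp only [hD_def]
          rw [if_neg (not_lt.2 (Set.mem_Ici.1 hx))]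
        · simp only [hD_def]
          rw [if_neg (lt_irrefl 0)]
      have := c1.union c2
      rw [Set.Iio_union_Ici] at this
      rwa [continuousWithinAt_univ] at this
    · have heq : D =ᶠ[nhds a] (fun x => α x * F x + g x) := by
        filter_upwards [Ioi_mem_nhds ha] with x hx
        simp only [hD_def]
        rw [if_neg (not_lt.2 (le_of_lt (Set.mem_Ioi.1 hx)))]
      rw [continuousAt_congr heq]
      exact ((hα_cont.continuousAt (Ici_mem_nhds ha)).mul
        (hFd a ha).differentiableAt.continuousAt).add (hg_cont.continuousAt (Ici_mem_nhds ha))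
  have hf_cd : ContDiff ℝ 1 f := by
    rw [contDiff_one_iff_deriv]
    exact ⟨fun a => (hfd a).differentiableAt, hdf ▸ hD_cont⟩
  -- bounds
  obtain ⟨K1, hK1⟩ : ∃ K1, ∀ x ∈ Set.Icc (0:ℝ) T, |F x| ≤ K1 := by
    obtain ⟨C, hC⟩ := isCompact_Icc.exists_bound_of_continuousOn
      (hF_cont.mono (fun x hx => hx.1))
    exact ⟨C, fun x hx => hC x hx⟩
  obtain ⟨K2, hK2⟩ : ∃ K2, ∀ x ∈ Set.Icc (0:ℝ) T, |α x * F x + g x| ≤ K2 := by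
    obtain ⟨C, hC⟩ := isCompact_Icc.exists_bound_of_continuousOn
      (((hα_cont.mul hF_cont).add hg_cont).mono (fun x (hx : x ∈ Set.Icc (0:ℝ) T) => hx.1))
    exact ⟨C, fun x hx => hC x hx⟩
  have hfb : ∃ C, ∀ a, |f a| ≤ C := by
    refine ⟨|g 0| + |K1|, fun a => ?_⟩
    rcases lt_trichotomy a 0 with ha | rfl | ha
    · have : f a = g 0 * (a * Real.exp a) := if_pos ha
      rw [this, abs_mul]
      have h1 := abs_mul_exp_le_one ha.le
      nlinarith [abs_nonneg (g 0), abs_nonneg K1, abs_nonneg (a * Real.exp a)]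
    · rw [hf0]
      simp [abs_nonneg]
      positivity
    · have hfa : f a = F a := if_neg (not_lt.2 ha.le)
      rcases le_total a T with h | h
      · rw [hfa]
        have := hK1 a ⟨ha.le, h⟩
        have h2 : K1 ≤ |K1| := le_abs_self K1
        nlinarith [abs_nonneg (g 0)]
      · rw [hfa, hFT a h]
        simp
        positivity
  have hdb : ∃ C, ∀ a, |deriv f a| ≤ C := by
    refine ⟨|g 0| + |K2|, fun a => ?_⟩
    rw [hdf]
    rcases lt_or_ge a 0 with ha | ha
    · have : D a = g 0 * ((1 + a) * Real.exp a) := if_pos ha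
      rw [this, abs_mul]
      have h1 := abs_one_add_mul_exp_le_one ha.le
      nlinarith [abs_nonneg (g 0), abs_nonneg K2, abs_nonneg ((1 + a) * Real.exp a)]
    · have hDa : D a = α a * F a + g a := if_neg (not_lt.2 ha)
      rcases le_total a T with h | h
      · rw [hDa]
        have := hK2 a ⟨ha, h⟩
        have h2 : K2 ≤ |K2| := le_abs_self K2
        nlinarith [abs_nonneg (g 0)]
      · rw [hDa, hFT a h, hgT a h]
        simp
        positivity
  -- apply the test hypothesis
  have h0 := htest f hf_cd hfb hdb hf0
  rw [hdf] at h0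
  have hmem : ∀ᵐ a ∂μ, a ∈ Set.Ici (0:ℝ) := by
    rw [MeasureTheory.ae_iff]
    have : {a : ℝ | ¬a ∈ Set.Ici (0:ℝ)} = Set.Iio 0 := by ext x; simp
    rw [this]; exact hsupp
  have hcongr : (fun a => D a - α a * f a) =ᵐ[μ] g := by
    filter_upwards [hmem] with a ha
    have h1 : f a = F a := if_neg (not_lt.2 (Set.mem_Ici.1 ha))
    have h2 : D a = α a * F a + g a := if_neg (not_lt.2 (Set.mem_Ici.1 ha))
    simp only [h1, h2]
    ring
  calc ∫ a, g a ∂μ = ∫ a, (D a - α a * f a) ∂μ := (integral_congr_ae hcongr).symm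
    _ = 0 := h0

/-- a finite measure on `[0,∞)` annihilating the generator
`f ↦ f' - α f` on bounded C¹ test functions with `f(0)=0` has density
proportional to the survival function `p(a) = exp(-∫_0^a α)`. -/
theorem stationary_measure_density
    (α : ℝ → ℝ) (hα_cont : ContinuousOn α (Set.Ici 0))
    (hα_nonneg : ∀ a ≥ (0:ℝ), 0 ≤ α a)
    (p : ℝ → ℝ) (hp : ∀ a, p a = Real.exp (-∫ u in (0:ℝ)..a, α u))
    (hp_int_pos : 0 < ∫ a in Set.Ioi (0:ℝ), p a)
    (hp_int : IntegrableOn p (Set.Ioi 0))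
    (μ : Measure ℝ) [IsFiniteMeasure μ] (hsupp : μ (Set.Iio 0) = 0)
    (hα_int : Integrable α μ)
    (htest : ∀ f : ℝ → ℝ, ContDiff ℝ 1 f →
        (∃ C, ∀ a, |f a| ≤ C) → (∃ C, ∀ a, |deriv f a| ≤ C) → f 0 = 0 →
        ∫ a, (deriv f a - α a * f a) ∂μ = 0) :
    ∀ A : Set ℝ, MeasurableSet A → A ⊆ Set.Ici 0 →
      (μ A).toReal
        = (μ Set.univ).toReal * (∫ a in A, p a) / ∫ a in Set.Ioi (0:ℝ), p a := by
  -- continuity of p on [0,∞)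
  set q : ℝ → ℝ := fun a => ∫ u in (0:ℝ)..a, α u with hq_def
  have hα_contIoi : ContinuousOn α (Ioi 0) := hα_cont.mono Ioi_subset_Ici_self
  have hαii : ∀ a : ℝ, 0 ≤ a → IntervalIntegrable α volume 0 a := by
    intro a ha
    apply ContinuousOn.intervalIntegrable
    apply hα_cont.mono
    rw [Set.uIcc_of_le ha]
    exact fun x hx => hx.1
  have hqd : ∀ a : ℝ, 0 < a → HasDerivAt q (α a) a := by
    intro a ha
    exact intervalIntegral.integral_hasDerivAt_right (hαii a ha.le)
      (hα_contIoi.stronglyMeasurableAtFilter isOpen_Ioi a ha)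
      (hα_cont.continuousAt (Ici_mem_nhds ha))
  have hqd0 : HasDerivWithinAt q (α 0) (Ici (0:ℝ)) 0 :=
    intervalIntegral.integral_hasDerivWithinAt_right (IntervalIntegrable.refl)
      (hα_contIoi.stronglyMeasurableAtFilter_nhdsWithin measurableSet_Ioi 0)
      ((hα_cont 0 Set.self_mem_Ici).mono Ioi_subset_Ici_self)
  have hq_cont : ContinuousOn q (Ici 0) := by
    intro a ha
    rcases eq_or_lt_of_le (Set.mem_Ici.1 ha) with rfl | h
    · exact hqd0.continuousWithinAt
    · exact ((hqd a h).continuousAt).continuousWithinAt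
  have hp_eq : p = fun a => Real.exp (-q a) := funext hp
  have hp_cont : ContinuousOn p (Ici 0) := by
    rw [hp_eq]; exact Real.continuous_exp.comp_continuousOn hq_cont.neg
  have hp_pos : ∀ a, 0 < p a := fun a => by rw [hp a]; exact Real.exp_pos _
  -- integrability of p * g on (0,∞) for compactly supported g
  have hpIOn : ∀ g : ℝ → ℝ, ContinuousOn g (Ici 0) → ∀ T : ℝ, 0 < T → (∀ a ≥ T, g a = 0) →
      IntegrableOn (fun a => p a * g a) (Ioi 0) volume := by
    intro g hgc T hT hgT
    have h1 : IntegrableOn (fun a => p a * g a) (Ioc 0 T) volume :=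
      (ContinuousOn.integrableOn_Icc ((hp_cont.mul hgc).mono (fun x hx => hx.1))).mono_set
        Set.Ioc_subset_Icc_self
    have h2 : IntegrableOn (fun a => p a * g a) (Ioi T) volume := by
      apply (integrableOn_zero (μ := volume) (s := Set.Ioi T)).congr_fun _ measurableSet_Ioi
      intro x hx
      exact (mul_eq_zero_of_right _ (hgT x (le_of_lt hx))).symm
    have := h1.union h2
    rwa [Set.Ioc_union_Ioi_eq_Ioi hT.le] at this
  -- integrability of bounded measurable functions against μ
  have hIntμ : ∀ g : ℝ → ℝ, Measurable g → (∃ C, ∀ a, |g a| ≤ C) → Integrable g μ := by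
    rintro g hgm ⟨C, hC⟩
    exact (integrable_const C).mono' hgm.aestronglyMeasurable
      (Filter.Eventually.of_forall fun a => by simpa [Real.norm_eq_abs] using hC a)
  -- the reference bump function g₀
  set g₀ : ℝ → ℝ := fun a => max 0 (1 - |a - 2|) with hg₀_def
  have hg₀_cont : Continuous g₀ := by fun_prop
  have hg₀_nonneg : ∀ a, 0 ≤ g₀ a := fun a => le_max_left _ _
  have hg₀_le_one : ∀ a, g₀ a ≤ 1 := fun a => max_le (by norm_num) (by
    have := abs_nonneg (a - 2); linarith)
  have hg₀_neg : ∀ a < (0:ℝ), g₀ a = 0 := by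
    intro a ha
    have h1 : |a - 2| = 2 - a := by rw [abs_of_nonpos (by linarith)]; ring
    simp only [hg₀_def]
    rw [h1]
    exact max_eq_left (by linarith)
  have hg₀T : ∀ a ≥ (3:ℝ), g₀ a = 0 := by
    intro a ha
    have h1 : |a - 2| = a - 2 := abs_of_nonneg (by linarith)
    simp only [hg₀_def]
    rw [h1]
    exact max_eq_left (by linarith)
  set I₀ : ℝ := ∫ a in Set.Ioi (0:ℝ), p a * g₀ a with hI₀_def
  have hI₀_int : IntegrableOn (fun a => p a * g₀ a) (Ioi 0) volume :=
    hpIOn g₀ hg₀_cont.continuousOn 3 (by norm_num) hg₀T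
  have hI₀_pos : 0 < I₀ := by
    rw [hI₀_def]
    rw [setIntegral_pos_iff_support_of_nonneg_ae
      (Filter.Eventually.of_forall fun a => mul_nonneg (hp_pos a).le (hg₀_nonneg a)) hI₀_int]
    apply lt_of_lt_of_le _ (measure_mono (show Set.Ioo (1:ℝ) 3 ⊆ _ from ?_))
    · rw [Real.volume_Ioo]; norm_num
    · intro a ha
      constructor
      · rw [Function.mem_support]
        apply mul_ne_zero (hp_pos a).ne'
        have h2 : |a - 2| < 1 := abs_lt.2 ⟨by linarith [ha.1], by linarith [ha.2]⟩
        have : 0 < 1 - |a - 2| := by linarith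
        simp only [hg₀_def]
        rw [max_eq_right this.le]
        exact this.ne'
      · exact lt_trans one_pos ha.1
  set c : ℝ := (∫ a, g₀ a ∂μ) / I₀ with hc_def
  have hc_nonneg : 0 ≤ c :=
    div_nonneg (integral_nonneg hg₀_nonneg) hI₀_pos.le
  -- the key identity for all compactly supported test profiles
  have hprop : ∀ g : ℝ → ℝ, ContinuousOn g (Ici 0) → Measurable g →
      (∃ C, ∀ a, |g a| ≤ C) → (∀ a < (0:ℝ), g a = 0) → ∀ T : ℝ, 0 < T → (∀ a ≥ T, g a = 0) →
      ∫ a, g a ∂μ = c * ∫ a in Set.Ioi (0:ℝ), p a * g a := by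
    intro g hgc hgm hgb hgneg T hT hgT
    set r : ℝ := (∫ a in Set.Ioi (0:ℝ), p a * g a) / I₀ with hr_def
    have hgg := master_test α hα_cont p hp μ hsupp htest
      (fun a => g a - r * g₀ a)
      (hgc.sub ((continuous_const.mul hg₀_cont).continuousOn))
      (fun a ha => by show g a - r * g₀ a = 0; rw [hgneg a ha, hg₀_neg a ha]; ring)
      (max T 3) (lt_max_of_lt_right (by norm_num))
      (fun a ha => by
        show g a - r * g₀ a = 0
        rw [hgT a (le_trans (le_max_left T 3) ha), hg₀T a (le_trans (le_max_right T 3) ha)]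
        ring)
      (by
        have hsplit : ∀ a : ℝ, p a * (g a - r * g₀ a) = p a * g a - r * (p a * g₀ a) := by
          intro a; ring
        simp only [hsplit]
        rw [integral_sub (hpIOn g hgc T hT hgT) ((hI₀_int.const_mul r))]
        rw [integral_const_mul, ← hI₀_def]
        rw [hr_def]
        field_simp
        ring)
    have hint_g : Integrable g μ := hIntμ g hgm hgb
    have hint_g₀ : Integrable (fun a => r * g₀ a) μ :=
      (hIntμ g₀ hg₀_cont.measurable ⟨1, fun a => by
        rw [abs_of_nonneg (hg₀_nonneg a)]; exact hg₀_le_one a⟩).const_mul r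
    rw [integral_sub hint_g hint_g₀, integral_const_mul, sub_eq_zero] at hgg
    rw [hgg, hr_def, hc_def]
    ring
  -- cumulative distribution identity
  have hkey : ∀ x : ℝ, 0 ≤ x → (μ (Set.Icc 0 x)).toReal = c * ∫ a in Set.Ioc 0 x, p a := by
    intro x hx
    set δ : ℕ → ℝ := fun n => 1 / ((n : ℝ) + 1) with hδ_def
    have hδ_pos : ∀ n : ℕ, 0 < δ n := fun n => by simp only [hδ_def]; positivity
    have hδ_mul : ∀ n : ℕ, ((n : ℝ) + 1) * δ n = 1 := fun n => by
      simp only [hδ_def]; field_simp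
    set G : ℕ → ℝ → ℝ := fun n a =>
      if a < 0 then 0 else max 0 (min 1 (((n : ℝ) + 1) * (x + δ n - a))) with hG_def
    have hG_cont : ∀ n, ContinuousOn (G n) (Ici 0) := by
      intro n
      apply ContinuousOn.congr
        (f := fun a => max 0 (min 1 (((n : ℝ) + 1) * (x + δ n - a))))
      · fun_prop
      · intro a ha
        simp only [hG_def]
        rw [if_neg (not_lt.2 (Set.mem_Ici.1 ha))]
    have hG_meas : ∀ n, Measurable (G n) := by
      intro n
      apply Measurable.ite
      · exact measurableSet_Iio
      · exact measurable_const
      · fun_prop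
    have hG_nonneg : ∀ n a, 0 ≤ G n a := by
      intro n a
      simp only [hG_def]
      split
      · exact le_refl 0
      · exact le_max_left _ _
    have hG_le_one : ∀ n a, G n a ≤ 1 := by
      intro n a
      simp only [hG_def]
      split
      · norm_num
      · exact max_le (by norm_num) (min_le_left _ _)
    have hG_bdd : ∀ n, ∃ C, ∀ a, |G n a| ≤ C := by
      intro n
      exact ⟨1, fun a => by rw [abs_of_nonneg (hG_nonneg n a)]; exact hG_le_one n a⟩
    have hG_neg : ∀ n, ∀ a < (0:ℝ), G n a = 0 := by
      intro n a ha; simp only [hG_def]; rw [if_pos ha]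
    have hG_T : ∀ n, ∀ a ≥ x + 1, G n a = 0 := by
      intro n a ha
      have h0 : (0:ℝ) ≤ a := le_trans (by linarith) ha
      have hy : ((n : ℝ) + 1) * (x + δ n - a) ≤ 0 := by
        have h1 : ((n : ℝ) + 1) * (x + δ n - a)
            = ((n : ℝ) + 1) * (x - a) + 1 := by
          linear_combination hδ_mul n
        have h2 : x - a ≤ -1 := by linarith
        nlinarith [(Nat.cast_nonneg n : (0:ℝ) ≤ (n:ℝ))]
      simp only [hG_def]
      rw [if_neg (not_lt.2 h0), min_eq_right (by linarith), max_eq_left hy]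
    -- each n gives the identity
    have hid : ∀ n, ∫ a, G n a ∂μ = c * ∫ a in Set.Ioi (0:ℝ), p a * G n a := by
      intro n
      exact hprop (G n) (hG_cont n) (hG_meas n) (hG_bdd n) (hG_neg n)
        (x + 1) (by linarith) (hG_T n)
    -- pointwise limit
    have hlim : ∀ a : ℝ, Filter.Tendsto (fun n => G n a) Filter.atTop
        (nhds (Set.indicator (Set.Icc 0 x) (fun _ => (1:ℝ)) a)) := by
      intro a
      rcases lt_or_ge a 0 with ha | ha
      · have : ∀ n, G n a = 0 := fun n => hG_neg n a ha
        simp only [this]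
        have : Set.indicator (Set.Icc 0 x) (fun _ => (1:ℝ)) a = 0 :=
          Set.indicator_of_notMem (fun h => absurd h.1 (not_le.2 ha)) _
        rw [this]
        exact tendsto_const_nhds
      · rcases le_or_gt a x with hax | hax
        · have : ∀ n, G n a = 1 := by
            intro n
            have hy : (1:ℝ) ≤ ((n : ℝ) + 1) * (x + δ n - a) := by
              have h1 : δ n ≤ x + δ n - a := by linarith
              calc (1:ℝ) = ((n : ℝ) + 1) * δ n := (hδ_mul n).symm
                _ ≤ ((n : ℝ) + 1) * (x + δ n - a) := by
                    apply mul_le_mul_of_nonneg_left h1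
                    positivity
            simp only [hG_def]
            rw [if_neg (not_lt.2 ha), min_eq_left hy, max_eq_right (by norm_num)]
          simp only [this]
          have : Set.indicator (Set.Icc 0 x) (fun _ => (1:ℝ)) a = 1 :=
            Set.indicator_of_mem (Set.mem_Icc.2 ⟨ha, hax⟩) _
          rw [this]
          exact tendsto_const_nhds
        · have : Set.indicator (Set.Icc 0 x) (fun _ => (1:ℝ)) a = 0 :=
            Set.indicator_of_notMem (fun h => absurd h.2 (not_le.2 hax)) _
          rw [this]
          apply Filter.Tendsto.congr' _ tendsto_const_nhds
          rw [Filter.EventuallyEq, Filter.eventually_atTop]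
          refine ⟨⌈1 / (a - x)⌉₊, fun n hn => ?_⟩
          have hax' : 0 < a - x := by linarith
          have h1 : 1 / (a - x) ≤ (n : ℝ) := le_trans (Nat.le_ceil _) (Nat.cast_le.2 hn)
          have h2 : 1 ≤ ((n : ℝ) + 1) * (a - x) := by
            rw [div_le_iff₀ hax'] at h1
            nlinarith
          have hy : ((n : ℝ) + 1) * (x + δ n - a) ≤ 0 := by
            have h3 : ((n : ℝ) + 1) * (x + δ n - a)
                = 1 - ((n : ℝ) + 1) * (a - x) := by nlinarith [hδ_mul n]
            linarith
          symm
          simp only [hG_def]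
          rw [if_neg (not_lt.2 ha), min_eq_right (by linarith), max_eq_left hy]
    -- limit of LHS
    have hL1 : Filter.Tendsto (fun n => ∫ a, G n a ∂μ) Filter.atTop
        (nhds ((μ (Set.Icc 0 x)).toReal)) := by
      have := tendsto_integral_of_dominated_convergence (μ := μ)
        (F := fun n a => G n a) (f := fun a => Set.indicator (Set.Icc 0 x) (fun _ => (1:ℝ)) a)
        (bound := fun _ => 1)
        (fun n => (hG_meas n).aestronglyMeasurable)
        (integrable_const 1)
        (fun n => Filter.Eventually.of_forall fun a => by
          rw [Real.norm_eq_abs, abs_of_nonneg (hG_nonneg n a)]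
          exact hG_le_one n a)
        (Filter.Eventually.of_forall hlim)
      have h6 : (∫ a, Set.indicator (Set.Icc 0 x) (fun _ => (1:ℝ)) a ∂μ)
          = (μ (Set.Icc 0 x)).toReal := by
        rw [show (fun _ : ℝ => (1:ℝ)) = (1 : ℝ → ℝ) from rfl,
          integral_indicator_one measurableSet_Icc, measureReal_def]
      rwa [h6] at this
    -- limit of RHS
    have hL2 : Filter.Tendsto (fun n => ∫ a in Set.Ioi (0:ℝ), p a * G n a) Filter.atTop
        (nhds (∫ a in Set.Ioc (0:ℝ) x, p a)) := by
      have hmeasp : AEStronglyMeasurable p (volume.restrict (Ioi 0)) :=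
        (hp_cont.mono Ioi_subset_Ici_self).aestronglyMeasurable measurableSet_Ioi
      have h2 := tendsto_integral_of_dominated_convergence (μ := volume.restrict (Ioi 0))
        (F := fun n a => p a * G n a)
        (f := fun a => p a * Set.indicator (Set.Icc 0 x) (fun _ => (1:ℝ)) a)
        (bound := p)
        (fun n => hmeasp.mul (hG_meas n).aestronglyMeasurable.restrict)
        hp_int
        (fun n => Filter.Eventually.of_forall fun a => by
          rw [Real.norm_eq_abs, abs_mul, abs_of_nonneg (hG_nonneg n a),
            abs_of_nonneg (hp_pos a).le]
          calc p a * G n a ≤ p a * 1 := by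
                apply mul_le_mul_of_nonneg_left (hG_le_one n a) (hp_pos a).le
            _ = p a := mul_one _)
        (Filter.Eventually.of_forall fun a => (hlim a).const_mul (p a))
      have h3 : (∫ a in Set.Ioi (0:ℝ),
          p a * Set.indicator (Set.Icc 0 x) (fun _ => (1:ℝ)) a)
          = ∫ a in Set.Ioc (0:ℝ) x, p a := by
        have h4 : ∀ a, p a * Set.indicator (Set.Icc 0 x) (fun _ => (1:ℝ)) a
            = Set.indicator (Set.Icc 0 x) p a := by
          intro a
          by_cases hmem : a ∈ Set.Icc 0 x
          · rw [Set.indicator_of_mem hmem, Set.indicator_of_mem hmem, mul_one]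
          · rw [Set.indicator_of_notMem hmem, Set.indicator_of_notMem hmem, mul_zero]
        simp only [h4]
        have h7 : Set.Ioi (0:ℝ) ∩ Set.Icc 0 x = Set.Ioc 0 x := by
          apply Set.ext
          intro a
          rw [Set.mem_inter_iff, Set.mem_Ioi, Set.mem_Icc, Set.mem_Ioc]
          constructor
          · rintro ⟨h1, _, h3⟩; exact ⟨h1, h3⟩
          · rintro ⟨h1, h3⟩; exact ⟨h1, h1.le, h3⟩
        rw [setIntegral_indicator measurableSet_Icc, h7]
      rwa [h3] at h2
    simp only [hid] at hL1
    exact tendsto_nhds_unique hL1 (hL2.const_mul c)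
  -- the comparison measure
  set ν : Measure ℝ := (volume.restrict (Set.Ioi 0)).withDensity
      (fun a => ENNReal.ofReal (c * p a)) with hν_def
  have hν_apply : ∀ s : Set ℝ, MeasurableSet s →
      ν s = ENNReal.ofReal (c * ∫ a in s ∩ Set.Ioi 0, p a) := by
    intro s hs
    rw [hν_def, withDensity_apply _ hs, Measure.restrict_restrict hs]
    have hInt0 : IntegrableOn (fun a => c * p a) (Set.Ioi 0) volume := hp_int.const_mul c
    have hInt : IntegrableOn (fun a => c * p a) (s ∩ Set.Ioi 0) volume :=
      hInt0.mono_set Set.inter_subset_right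
    rw [← ofReal_integral_eq_lintegral_ofReal hInt
      (Filter.Eventually.of_forall fun a => mul_nonneg hc_nonneg (hp_pos a).le)]
    rw [integral_const_mul]
  have hμν : μ = ν := by
    apply Measure.ext_of_Iic
    intro x
    rcases lt_or_ge x 0 with hx | hx
    · have h1 : μ (Set.Iic x) = 0 :=
        measure_mono_null (fun a (ha : a ≤ x) => lt_of_le_of_lt ha hx) hsupp
      have h2 : Set.Iic x ∩ Set.Ioi 0 = ∅ := by
        ext a
        simp only [Set.mem_inter_iff, Set.mem_Iic, Set.mem_Ioi, Set.mem_empty_iff_false,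
          iff_false, not_and, not_lt]
        intro ha; linarith
      rw [h1, hν_apply _ measurableSet_Iic, h2]
      simp
    · have h1 : μ (Set.Iic x) = μ (Set.Icc 0 x) := by
        have hsub : Set.Iic x = Set.Iio 0 ∪ Set.Icc 0 x := by
          ext a
          simp only [Set.mem_Iic, Set.mem_union, Set.mem_Iio, Set.mem_Icc]
          constructor
          · intro h; rcases lt_or_ge a 0 with h' | h'
            · exact Or.inl h'
            · exact Or.inr ⟨h', h⟩
          · rintro (h | ⟨_, h⟩)
            · linarith
            · exact h
        rw [hsub]
        refine le_antisymm ?_ (measure_mono Set.subset_union_right)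
        calc μ (Set.Iio 0 ∪ Set.Icc 0 x) ≤ μ (Set.Iio 0) + μ (Set.Icc 0 x) := measure_union_le _ _
          _ = μ (Set.Icc 0 x) := by rw [hsupp, zero_add]
      have h2 : Set.Iic x ∩ Set.Ioi 0 = Set.Ioc 0 x := by
        ext a
        simp only [Set.mem_inter_iff, Set.mem_Iic, Set.mem_Ioi, Set.mem_Ioc]
        tauto
      rw [h1, hν_apply _ measurableSet_Iic, h2, ← hkey x hx]
      rw [ENNReal.ofReal_toReal (measure_ne_top μ _)]
  -- conclusion
  intro A hA hAsub
  have hAP : (μ A).toReal = c * ∫ a in A, p a := by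
    have h1 : μ A = ENNReal.ofReal (c * ∫ a in A ∩ Set.Ioi 0, p a) := by
      rw [hμν]; exact hν_apply A hA
    have h2 : (∫ a in A ∩ Set.Ioi 0, p a) = ∫ a in A, p a := by
      apply setIntegral_congr_set
      have hsub2 : A ∩ Set.Ioi 0 = A \ {0} := by
        ext a
        simp only [Set.mem_inter_iff, Set.mem_Ioi, Set.mem_diff, Set.mem_singleton_iff]
        constructor
        · rintro ⟨ha, h0⟩; exact ⟨ha, h0.ne'⟩
        · rintro ⟨ha, h0⟩; exact ⟨ha, lt_of_le_of_ne (hAsub ha) (Ne.symm h0)⟩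
      rw [hsub2]
      exact diff_ae_eq_self.2 (measure_mono_null Set.inter_subset_right (measure_singleton 0))
    rw [h1, h2, ENNReal.toReal_ofReal]
    apply mul_nonneg hc_nonneg
    apply setIntegral_nonneg hA
    exact fun a _ => (hp_pos a).le
  have htot : (μ Set.univ).toReal = c * ∫ a in Set.Ioi (0:ℝ), p a := by
    have h1 : μ Set.univ = ENNReal.ofReal (c * ∫ a in Set.univ ∩ Set.Ioi 0, p a) := by
      rw [hμν]; exact hν_apply Set.univ MeasurableSet.univ
    rw [Set.univ_inter] at h1
    rw [h1, ENNReal.toReal_ofReal]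
    exact mul_nonneg hc_nonneg (le_of_lt hp_int_pos)
  rw [hAP, htot]
  have hPne : (∫ a in Set.Ioi (0:ℝ), p a) ≠ 0 := ne_of_gt hp_int_pos
  field_simp
end

section
/- Let α_S, α_M : [0,∞) → [0,∞) be continuous, set p_r(a) = exp(−∫_0^a α_r(u) du) for r ∈ {S, M}, and assume ∫_0^∞ p_r(a) da < ∞ for both r. Let μ_S, μ_M be finite Borel measures on [0,∞) with ∫_0^∞ α_r(a) μ_r(da) < ∞, and suppose that for all bounded continuously differentiable functions f_S, f_M : [0,∞) → ℝ with bounded derivatives one has ∫_0^∞ (f_S'(a) + α_S(a)(f_M(0) − f_S(a))) μ_S(da) + ∫_0^∞ (f_M'(a) + α_M(a)(f_S(0) − f_M(a))) μ_M(da) = 0. Then there is a constant c ≥ 0, namely c = (μ_S([0,∞)) + μ_M([0,∞))) / (∫_0^∞ p_S + ∫_0^∞ p_M), such that for r ∈ {S, M} and every Borel set A ⊆ [0,∞), μ_r(A) = c ∫_A p_r(a) da. -/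
open MeasureTheory Real
open Set Filter Topology
open scoped ENNReal NNReal

noncomputable def Gtr : ℝ → ℝ := fun a => Real.smoothTransition (a + 2)

lemma Gtr_contDiff : ContDiff ℝ 1 Gtr :=
  (Real.smoothTransition.contDiff).comp (contDiff_id.add contDiff_const)

lemma Gtr_one {a : ℝ} (h : -1 ≤ a) : Gtr a = 1 :=
  Real.smoothTransition.one_of_one_le (by linarith)

lemma Gtr_zero {a : ℝ} (h : a ≤ -2) : Gtr a = 0 :=
  Real.smoothTransition.zero_of_nonpos (by linarith)

lemma Gtr_deriv_zero_of_gt {a : ℝ} (h : -1 < a) : deriv Gtr a = 0 := by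
  have he : Gtr =ᶠ[nhds a] fun _ => (1:ℝ) := by
    filter_upwards [Ioi_mem_nhds h] with x hx
    exact Gtr_one (le_of_lt hx)
  rw [he.deriv_eq]; exact deriv_const a 1

lemma Gtr_deriv_zero_of_lt {a : ℝ} (h : a < -2) : deriv Gtr a = 0 := by
  have he : Gtr =ᶠ[nhds a] fun _ => (0:ℝ) := by
    filter_upwards [Iio_mem_nhds h] with x hx
    exact Gtr_zero (le_of_lt hx)
  rw [he.deriv_eq]; exact deriv_const a 0

lemma Gtr_deriv_support : HasCompactSupport (deriv Gtr) := by
  apply HasCompactSupport.intro (isCompact_Icc (a := (-2:ℝ)) (b := (-1:ℝ)))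
  intro x hx
  simp only [mem_Icc, not_and_or, not_le] at hx
  rcases hx with h | h
  · exact Gtr_deriv_zero_of_lt h
  · exact Gtr_deriv_zero_of_gt h

lemma intZero {f : ℝ → ℝ} {a b : ℝ} (h : ∀ u ∈ Set.uIcc a b, f u = 0) :
    ∫ u in a..b, f u = 0 := by
  rw [intervalIntegral.integral_congr (g := fun _ => (0:ℝ)) h]
  simp

lemma smooth_ident (ν : Measure ℝ) [IsFiniteMeasureOnCompacts ν]
    (hsupp : ν (Set.Iio 0) = 0) (K : ℝ)
    (h : ∀ φ : ℝ → ℝ, ContDiff ℝ 1 φ → HasCompactSupport φ →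
      ∫ a, deriv φ a ∂ν = -(K * φ 0))
    (ψ : ℝ → ℝ) (hψc : Continuous ψ) (hψs : HasCompactSupport ψ)
    (hψ0 : ∀ a ≤ 0, ψ a = 0) :
    ∫ a, ψ a ∂ν = K * ∫ a, ψ a := by
  obtain ⟨r, hr⟩ := hψs.isCompact.isBounded.subset_closedBall 0
  set R : ℝ := max r 2 + 1 with hR
  have hrR : r < R := by simp only [hR]; nlinarith [le_max_left r 2]
  have h2R : (2:ℝ) < R := by have := le_max_right r 2; simp only [hR]; linarith
  have hsub : tsupport ψ ⊆ Icc (-r) r := by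
    simpa [Real.closedBall_eq_Icc, zero_sub, zero_add] using hr
  have hψz : ∀ a, a ∉ Icc (-r) r → ψ a = 0 := fun a ha =>
    image_eq_zero_of_notMem_tsupport (fun hc => ha (hsub hc))
  set Φ : ℝ → ℝ := fun x => ∫ u in (-R)..x, ψ u with hΦ
  have hΦd : ∀ x, HasDerivAt Φ (ψ x) x := fun x =>
    intervalIntegral.integral_hasDerivAt_right (hψc.intervalIntegrable _ _)
      (hψc.stronglyMeasurableAtFilter _ _) hψc.continuousAt
  have hderivΦ : deriv Φ = ψ := funext fun x => (hΦd x).deriv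
  have hΦc : ContDiff ℝ 1 Φ := contDiff_one_iff_deriv.mpr
    ⟨fun x => (hΦd x).differentiableAt, by rw [hderivΦ]; exact hψc⟩
  set T : ℝ := Φ R with hT
  set φ : ℝ → ℝ := fun x => Φ x - T * Gtr x with hφ
  have hφc : ContDiff ℝ 1 φ := hΦc.sub (contDiff_const.mul Gtr_contDiff)
  have hGd : Differentiable ℝ Gtr := Gtr_contDiff.differentiable one_ne_zero
  have hderivφ : ∀ x, deriv φ x = ψ x - T * deriv Gtr x := by
    intro x
    have : deriv φ x = deriv Φ x - deriv (fun y => T * Gtr y) x :=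
      deriv_sub (hΦd x).differentiableAt ((hGd x).const_mul T)
    rw [this, deriv_const_mul T (hGd x), hderivΦ]
  have hφs : HasCompactSupport φ := by
    apply HasCompactSupport.intro (isCompact_Icc (a := (-R)) (b := R))
    intro x hx
    simp only [mem_Icc, not_and_or, not_le] at hx
    have hgoal : Φ x - T * Gtr x = 0 → φ x = 0 := fun hh => hh
    apply hgoal
    rcases hx with hx | hx
    · have hΦx : Φ x = 0 := by
        show (∫ u in (-R)..x, ψ u) = 0
        rw [intervalIntegral.integral_symm]
        rw [intZero ?_]
        · ring
        intro u hu
        rw [uIcc_of_le (by linarith : x ≤ -R)] at hu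
        exact hψz u (by simp only [mem_Icc]; intro h1; nlinarith [hu.2])
      rw [hΦx, Gtr_zero (by linarith : x ≤ -2)]; ring
    · have hΦx : Φ x = T := by
        show (∫ u in (-R)..x, ψ u) = T
        have h1 : (∫ u in (-R)..R, ψ u) + ∫ u in R..x, ψ u = ∫ u in (-R)..x, ψ u :=
          intervalIntegral.integral_add_adjacent_intervals
            (hψc.intervalIntegrable (-R) R) (hψc.intervalIntegrable R x)
        have h2 : (∫ u in R..x, ψ u) = 0 := by
          apply intZero
          intro u hu
          rw [uIcc_of_le (by linarith : R ≤ x)] at hu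
          exact hψz u (by simp only [mem_Icc]; intro h1; nlinarith [hu.1])
        rw [← h1, h2, add_zero]
      rw [hΦx, Gtr_one (by linarith : (-1:ℝ) ≤ x)]; ring
  have hφ0 : φ 0 = -T := by
    have hΦ0 : Φ 0 = 0 := by
      show (∫ u in (-R)..0, ψ u) = 0
      apply intZero
      intro u hu
      rw [uIcc_of_le (by linarith : -R ≤ 0)] at hu
      exact hψ0 u hu.2
    show Φ 0 - T * Gtr 0 = -T
    rw [hΦ0, Gtr_one (by norm_num : (-1:ℝ) ≤ 0)]; ring
  have hkey := h φ hφc hφs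
  rw [hφ0] at hkey
  have hψint : Integrable ψ ν := hψc.integrable_of_hasCompactSupport hψs
  have hGint : Integrable (fun a => T * deriv Gtr a) ν :=
    ((Gtr_contDiff.continuous_deriv le_rfl).integrable_of_hasCompactSupport
      Gtr_deriv_support).const_mul T
  have hae : ∀ᵐ a ∂ν, (0:ℝ) ≤ a := by
    rw [ae_iff]
    simpa [Set.Iio] using hsupp
  have hGzero : ∫ a, deriv Gtr a ∂ν = 0 := by
    rw [integral_eq_zero_of_ae]
    filter_upwards [hae] with a ha
    exact Gtr_deriv_zero_of_gt (by linarith)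
  have hsplit : ∫ a, deriv φ a ∂ν = ∫ a, ψ a ∂ν - T * ∫ a, deriv Gtr a ∂ν := by
    rw [show (fun a => deriv φ a) = fun a => ψ a - T * deriv Gtr a from funext hderivφ]
    rw [integral_sub hψint hGint, integral_const_mul]
  rw [hsplit, hGzero] at hkey
  have hTlam : T = ∫ a, ψ a := by
    show (∫ u in (-R)..R, ψ u) = ∫ a, ψ a
    apply intervalIntegral.integral_eq_integral_of_support_subset
    intro u hu
    have := hsub (subset_tsupport ψ hu)
    simp only [mem_Icc] at this
    exact ⟨by linarith [this.1], by linarith [this.2]⟩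
  rw [← hTlam]
  linarith [hkey]


lemma meas_Icc (ν : Measure ℝ) [IsFiniteMeasureOnCompacts ν]
    (K : ℝ)
    (hid : ∀ ψ : ℝ → ℝ, Continuous ψ → HasCompactSupport ψ →
      (∀ a ≤ 0, ψ a = 0) → ∫ a, ψ a ∂ν = K * ∫ a, ψ a)
    (s t : ℝ) (hs : 0 < s) (hst : s ≤ t) :
    ν (Icc s t) = ENNReal.ofReal (K * (t - s)) := by
  set δ : ℕ → ℝ := fun n => s / (n + 2) with hδ
  have hδpos : ∀ n, 0 < δ n := fun n => by positivity
  have hδle : ∀ n, δ n ≤ s / 2 := by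
    intro n
    apply div_le_div_of_nonneg_left hs.le (by norm_num)
    have : (0:ℝ) ≤ (n:ℝ) := Nat.cast_nonneg n
    linarith
  have hδ0 : Tendsto δ atTop (𝓝 0) := by
    rw [hδ]
    have h1 : Tendsto (fun n : ℕ => ((n:ℝ) + 2)) atTop atTop := by
      apply Filter.tendsto_atTop_add_const_right
      exact tendsto_natCast_atTop_atTop
    exact Filter.Tendsto.div_atTop tendsto_const_nhds h1
  set ψ : ℕ → ℝ → ℝ := fun n a =>
    max 0 (min 1 (min ((a - (s - δ n)) / δ n) ((t + δ n - a) / δ n))) with hψ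
  have hψcont : ∀ n, Continuous (ψ n) := by
    intro n
    apply continuous_const.max
    apply continuous_const.min
    apply Continuous.min
    · exact (continuous_id.sub continuous_const).div_const _
    · exact (continuous_const.sub continuous_id).div_const _
  have hψnonneg : ∀ n a, 0 ≤ ψ n a := fun n a => le_max_left _ _
  have hψle1 : ∀ n a, ψ n a ≤ 1 := by
    intro n a
    apply max_le (by norm_num) (min_le_left _ _)
  have hψzero : ∀ n a, a ∉ Icc (s - δ n) (t + δ n) → ψ n a = 0 := by
    intro n a ha
    simp only [mem_Icc, not_and_or, not_le] at ha
    have hd := hδpos n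
    apply max_eq_left
    rcases ha with ha | ha
    · calc min 1 (min ((a - (s - δ n)) / δ n) ((t + δ n - a) / δ n))
          ≤ (a - (s - δ n)) / δ n := le_trans (min_le_right _ _) (min_le_left _ _)
        _ ≤ 0 := by apply div_nonpos_of_nonpos_of_nonneg <;> linarith
    · calc min 1 (min ((a - (s - δ n)) / δ n) ((t + δ n - a) / δ n))
          ≤ (t + δ n - a) / δ n := le_trans (min_le_right _ _) (min_le_right _ _)
        _ ≤ 0 := by apply div_nonpos_of_nonpos_of_nonneg <;> linarith
  have hψone : ∀ n a, a ∈ Icc s t → ψ n a = 1 := by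
    intro n a ha
    simp only [mem_Icc] at ha
    have hd := hδpos n
    have h1 : (1:ℝ) ≤ (a - (s - δ n)) / δ n := by
      rw [le_div_iff₀ hd]; linarith [ha.1]
    have h2 : (1:ℝ) ≤ (t + δ n - a) / δ n := by
      rw [le_div_iff₀ hd]; linarith [ha.2]
    rw [hψ]
    simp only []
    rw [min_eq_left (le_min h1 h2), max_eq_right zero_le_one]
  -- support facts
  have hψsupp : ∀ n, HasCompactSupport (ψ n) := by
    intro n
    apply HasCompactSupport.intro (isCompact_Icc (a := s - δ n) (b := t + δ n))
    exact hψzero n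
  have hψneg : ∀ n, ∀ a ≤ (0:ℝ), ψ n a = 0 := by
    intro n a ha
    apply hψzero
    simp only [mem_Icc, not_and_or, not_le]
    left; linarith [hδle n]
  -- dominated convergence wrt an arbitrary measure that is finite on compacts
  have hDCT : ∀ (μ : Measure ℝ), IsFiniteMeasureOnCompacts μ →
      Tendsto (fun n => ∫ a, ψ n a ∂μ) atTop (𝓝 ((μ (Icc s t)).toReal)) := by
    intro μ hμ
    have hbint : Integrable ((Icc (s/2) (t+s)).indicator (fun _ => (1:ℝ))) μ := by
      rw [integrable_indicator_iff measurableSet_Icc]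
      exact integrableOn_const isCompact_Icc.measure_lt_top.ne
    have := MeasureTheory.tendsto_integral_of_dominated_convergence
      (F := fun n a => ψ n a) (f := (Icc s t).indicator (fun _ => (1:ℝ)))
      (bound := (Icc (s/2) (t+s)).indicator (fun _ => (1:ℝ)))
      (μ := μ) (fun n => (hψcont n).aestronglyMeasurable) hbint ?_ ?_
    · have heq : ∫ a, (Icc s t).indicator (fun _ => (1:ℝ)) a ∂μ = (μ (Icc s t)).toReal := by
        rw [MeasureTheory.integral_indicator_const (1:ℝ) measurableSet_Icc]
        simp [measureReal_def]
      rw [heq] at this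
      exact this
    · intro n
      apply Eventually.of_forall
      intro a
      rw [Real.norm_eq_abs, abs_of_nonneg (hψnonneg n a)]
      by_cases ha : a ∈ Icc (s/2) (t+s)
      · rw [indicator_of_mem ha]; exact hψle1 n a
      · rw [indicator_of_notMem ha]
        have : ψ n a = 0 := by
          apply hψzero
          simp only [mem_Icc, not_and_or, not_le] at ha ⊢
          rcases ha with ha | ha
          · left; linarith [hδle n, hδpos n]
          · right; linarith [hδle n, hδpos n]
        rw [this]
    · apply Eventually.of_forall
      intro a
      by_cases ha : a ∈ Icc s t
      · rw [indicator_of_mem ha]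
        exact tendsto_const_nhds.congr (fun n => (hψone n a ha).symm)
      · rw [indicator_of_notMem ha]
        simp only [mem_Icc, not_and_or, not_le] at ha
        apply Tendsto.congr' _ tendsto_const_nhds
        rcases ha with ha | ha
        · have : ∀ᶠ n in atTop, δ n < s - a :=
            hδ0.eventually (eventually_lt_nhds (by linarith))
          filter_upwards [this] with n hn
          exact (hψzero n a (by simp only [mem_Icc, not_and_or, not_le]; left; linarith)).symm
        · have : ∀ᶠ n in atTop, δ n < a - t :=
            hδ0.eventually (eventually_lt_nhds (by linarith))
          filter_upwards [this] with n hn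
          exact (hψzero n a (by simp only [mem_Icc, not_and_or, not_le]; right; linarith)).symm
  have hν := hDCT ν inferInstance
  have hvol := hDCT volume inferInstance
  have hident : ∀ n, ∫ a, ψ n a ∂ν = K * ∫ a, ψ n a :=
    fun n => hid (ψ n) (hψcont n) (hψsupp n) (hψneg n)
  have hν' : Tendsto (fun n => ∫ a, ψ n a ∂ν) atTop (𝓝 (K * (volume (Icc s t)).toReal)) := by
    have := hvol.const_mul K
    exact this.congr (fun n => (hident n).symm)
  have huniq : (ν (Icc s t)).toReal = K * (volume (Icc s t)).toReal :=
    tendsto_nhds_unique hν hν'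
  have hfin : ν (Icc s t) ≠ ⊤ := isCompact_Icc.measure_lt_top.ne
  rw [Real.volume_Icc, ENNReal.toReal_ofReal (by linarith)] at huniq
  rw [← ENNReal.ofReal_toReal hfin, huniq]

noncomputable def bump1 : ContDiffBump (0:ℝ) := ⟨1, 2, one_pos, one_lt_two⟩

lemma atom_zero (ν : Measure ℝ) [IsFiniteMeasureOnCompacts ν] (K : ℝ)
    (h : ∀ φ : ℝ → ℝ, ContDiff ℝ 1 φ → HasCompactSupport φ →
      ∫ a, deriv φ a ∂ν = -(K * φ 0)) :
    ν {0} = 0 := by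
  set χ : ℝ → ℝ := fun a => a * bump1 a with hχ
  have hbc : ContDiff ℝ 1 (fun a => (bump1 a : ℝ)) := bump1.contDiff
  have hχc : ContDiff ℝ 1 χ := contDiff_id.mul hbc
  have hχzero : ∀ a : ℝ, a ∉ Metric.ball (0:ℝ) 2 → χ a = 0 := by
    intro a ha
    have : bump1 a = 0 := by
      have := bump1.support_eq
      by_contra hne
      exact ha (this ▸ Function.mem_support.mpr hne)
    simp [hχ, this]
  have hχs : HasCompactSupport χ := by
    apply HasCompactSupport.intro (isCompact_closedBall (0:ℝ) 2)
    intro x hx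
    exact hχzero x (fun hb => hx (Metric.ball_subset_closedBall hb))
  have htsupp : tsupport χ ⊆ Metric.closedBall 0 2 := by
    rw [← closure_ball (0:ℝ) (by norm_num : (2:ℝ) ≠ 0)]
    apply closure_mono
    intro x hx
    by_contra hb
    exact hx (hχzero x hb)
  have hdχ : ∀ x, HasDerivAt χ (bump1 x + x * deriv (fun a => (bump1 a : ℝ)) x) x := by
    intro x
    have h1 : HasDerivAt (fun a : ℝ => a) 1 x := hasDerivAt_id x
    have h2 : HasDerivAt (fun a => (bump1 a : ℝ)) (deriv (fun a => (bump1 a : ℝ)) x) x :=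
      ((hbc.differentiable one_ne_zero) x).hasDerivAt
    have := h1.mul h2; simp only [one_mul] at this; exact this
  have hderivχ0 : deriv χ 0 = 1 := by
    rw [(hdχ 0).deriv]
    have : bump1 (0:ℝ) = 1 := bump1.one_of_mem_closedBall (by simp [bump1])
    simp [this]
  have hdcont : Continuous (deriv χ) := hχc.continuous_deriv le_rfl
  have hdsupp : ∀ x : ℝ, x ∉ Metric.closedBall (0:ℝ) 2 → deriv χ x = 0 := by
    intro x hx
    by_contra hne
    exact hx (htsupp (support_deriv_subset (Function.mem_support.mpr hne)))
  obtain ⟨C, hC⟩ := (hχs.deriv).exists_bound_of_continuous hdcont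
  -- test functions
  have hint : ∀ n : ℕ, ∫ a, deriv χ ((n+1) * a) ∂ν = 0 := by
    intro n
    have hn1 : ((n:ℝ)+1) ≠ 0 := by positivity
    set φ : ℝ → ℝ := fun a => (1/((n:ℝ)+1)) * χ (((n:ℝ)+1) * a) with hφ
    have hφc : ContDiff ℝ 1 φ :=
      contDiff_const.mul (hχc.comp (contDiff_const.mul contDiff_id))
    have hφd : ∀ a, HasDerivAt φ (deriv χ (((n:ℝ)+1)*a)) a := by
      intro a
      have hinner : HasDerivAt (fun a : ℝ => ((n:ℝ)+1) * a) ((n:ℝ)+1) a := by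
        simpa using (hasDerivAt_id a).const_mul ((n:ℝ)+1)
      have houter : HasDerivAt χ (deriv χ (((n:ℝ)+1)*a)) (((n:ℝ)+1)*a) :=
        ((hχc.differentiable one_ne_zero) _).hasDerivAt
      have := (houter.comp a hinner).const_mul (1/((n:ℝ)+1))
      rw [mul_comm (deriv χ _) _, ← mul_assoc, one_div_mul_cancel hn1, one_mul] at this
      exact this
    have hφs : HasCompactSupport φ := by
      apply HasCompactSupport.intro (isCompact_closedBall (0:ℝ) 2)
      intro x hx
      have hx2 : (2:ℝ) < |x| := by
        simpa [Metric.mem_closedBall, Real.dist_eq, not_le] using hx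
      have : χ (((n:ℝ)+1) * x) = 0 := by
        apply hχzero
        simp only [Metric.mem_ball, Real.dist_eq, not_lt, sub_zero, abs_mul]
        calc (2:ℝ) ≤ |x| := hx2.le
          _ ≤ |(n:ℝ)+1| * |x| := by
              have hn : |(n:ℝ)+1| = (n:ℝ)+1 := abs_of_pos (by positivity)
              nlinarith [abs_nonneg x, (Nat.cast_nonneg n : (0:ℝ) ≤ n)]
      simp [hφ, this]
    have hkey := h φ hφc hφs
    have hφ0 : φ 0 = 0 := by simp [hφ, hχ]
    rw [hφ0, mul_zero, neg_zero] at hkey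
    rw [← hkey]
    apply integral_congr_ae
    apply Eventually.of_forall
    intro a
    exact ((hφd a).deriv).symm
  -- dominated convergence
  have hdct : Tendsto (fun n : ℕ => ∫ a, deriv χ ((n+1) * a) ∂ν) atTop
      (𝓝 (∫ a, Set.indicator ({0} : Set ℝ) (fun _ => (1:ℝ)) a ∂ν)) := by
    apply MeasureTheory.tendsto_integral_of_dominated_convergence
      (bound := (Metric.closedBall (0:ℝ) 2).indicator (fun _ => C))
    · intro n
      exact (hdcont.comp (continuous_const.mul continuous_id)).aestronglyMeasurable
    · rw [integrable_indicator_iff measurableSet_closedBall]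
      exact integrableOn_const (isCompact_closedBall _ _).measure_lt_top.ne
    · intro n
      apply Eventually.of_forall
      intro a
      by_cases ha : a ∈ Metric.closedBall (0:ℝ) 2
      · rw [indicator_of_mem ha]; exact hC _
      · rw [indicator_of_notMem ha]
        have ha2 : (2:ℝ) < |a| := by
          simpa [Metric.mem_closedBall, Real.dist_eq, not_le] using ha
        have : deriv χ (((n:ℝ)+1) * a) = 0 := by
          apply hdsupp
          simp only [Metric.mem_closedBall, Real.dist_eq, not_le, sub_zero, abs_mul]
          calc (2:ℝ) < |a| := ha2
            _ ≤ |(n:ℝ)+1| * |a| := by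
                have hn : |(n:ℝ)+1| = (n:ℝ)+1 := abs_of_pos (by positivity)
                nlinarith [abs_nonneg a, (Nat.cast_nonneg n : (0:ℝ) ≤ n)]
        simp [this]
    · apply Eventually.of_forall
      intro a
      by_cases ha : a = 0
      · subst ha
        simp only [mul_zero]
        rw [Set.indicator_of_mem (show (0:ℝ) ∈ ({0}:Set ℝ) from rfl)]
        rw [hderivχ0]
        exact tendsto_const_nhds
      · rw [Set.indicator_of_notMem (by simpa using ha)]
        apply Tendsto.congr' _ tendsto_const_nhds
        have habs : 0 < |a| := abs_pos.mpr ha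
        have : ∀ᶠ n : ℕ in atTop, (2:ℝ)/|a| < (n:ℝ)+1 := by
          have := tendsto_natCast_atTop_atTop (R := ℝ)
          filter_upwards [this.eventually_gt_atTop (2/|a|)] with n hn
          linarith
        filter_upwards [this] with n hn
        symm
        apply hdsupp
        simp only [Metric.mem_closedBall, Real.dist_eq, not_le, sub_zero, abs_mul]
        have h1 : (0:ℝ) < (n:ℝ)+1 := by positivity
        rw [abs_of_pos h1]
        rw [div_lt_iff₀ habs] at hn
        linarith
  have h0 : ∫ a, Set.indicator ({0} : Set ℝ) (fun _ => (1:ℝ)) a ∂ν = (ν {0}).toReal := by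
    rw [MeasureTheory.integral_indicator_const (1:ℝ) (measurableSet_singleton 0)]
    simp [measureReal_def]
  have : Tendsto (fun _ : ℕ => (0:ℝ)) atTop (𝓝 ((ν {0}).toReal)) := by
    rw [← h0]
    exact hdct.congr (fun n => hint n)
  have hval : (ν {0}).toReal = 0 := tendsto_nhds_unique this tendsto_const_nhds
  have hfin : ν {0} ≠ ⊤ := ((isCompact_singleton).measure_lt_top).ne
  exact (ENNReal.toReal_eq_zero_iff _).mp hval |>.resolve_right hfin

lemma key_ext (ν : Measure ℝ) [IsFiniteMeasureOnCompacts ν] (K : ℝ) (hK : 0 ≤ K)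
    (hsupp : ν (Iio 0) = 0) (hatom0 : ν {0} = 0)
    (hIcc : ∀ s t, 0 < s → s ≤ t → ν (Icc s t) = ENNReal.ofReal (K * (t - s))) :
    ν = (ENNReal.ofReal K • volume).restrict (Ioi 0) := by
  have hIic : ν (Iic 0) = 0 := by
    have : Iic (0:ℝ) = Iio 0 ∪ {0} := by
      ext x; simp [le_iff_lt_or_eq]
    rw [this]
    exact measure_union_null hsupp hatom0
  have hatom : ∀ x : ℝ, 0 < x → ν {x} = 0 := by
    intro x hx
    have hfin : ν {x} ≠ ⊤ := (isCompact_singleton.measure_lt_top).ne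
    have hle : ∀ c : ℝ, 0 < c → (ν {x}).toReal ≤ c := by
      intro c hc
      set ε : ℝ := min (x/2) (c / (K + 1)) with hε
      have hε0 : 0 < ε := lt_min (by linarith) (by positivity)
      have hεx : ε ≤ x / 2 := min_le_left _ _
      have hmono : ν {x} ≤ ENNReal.ofReal (K * ε) := by
        have hrw : K * ε = K * (x - (x - ε)) := by ring
        rw [hrw, ← hIcc (x - ε) x (by linarith) (by linarith)]
        apply measure_mono
        intro y hy
        simp only [mem_singleton_iff] at hy
        rw [hy]
        exact ⟨by linarith, le_refl x⟩
      have := ENNReal.toReal_mono ENNReal.ofReal_ne_top hmono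
      rw [ENNReal.toReal_ofReal (by positivity)] at this
      have h2 : K * ε ≤ c := by
        have h3 : ε ≤ c / (K + 1) := min_le_right _ _
        have h4 : K * ε ≤ K * (c / (K + 1)) := by nlinarith
        have h5 : K * (c / (K + 1)) ≤ c := by
          rw [mul_div_assoc', div_le_iff₀ (by positivity)]
          nlinarith
        linarith
      linarith
    have : (ν {x}).toReal = 0 := le_antisymm
      (le_of_forall_pos_le_add (by intro ε hε; simpa using hle ε hε))
      ENNReal.toReal_nonneg
    exact ((ENNReal.toReal_eq_zero_iff _).mp this).resolve_right hfin
  have hIoc_pos : ∀ a b : ℝ, 0 < a → a ≤ b → ν (Ioc a b) = ENNReal.ofReal (K * (b - a)) := by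
    intro a b ha hab
    have h1 : ν (Icc a b) = ν (Ioc a b) := by
      apply le_antisymm
      · rw [← Set.Ioc_insert_left hab, Set.insert_eq]
        calc ν ({a} ∪ Ioc a b) ≤ ν {a} + ν (Ioc a b) := measure_union_le _ _
          _ = ν (Ioc a b) := by rw [hatom a ha, zero_add]
      · exact measure_mono Set.Ioc_subset_Icc_self
    rw [← h1, hIcc a b ha hab]
  have hIoc0 : ∀ b : ℝ, 0 < b → ν (Ioc 0 b) = ENNReal.ofReal (K * b) := by
    intro b hb
    set s : ℕ → Set ℝ := fun n => Icc (b / (n + 2)) b with hs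
    have hmono : Monotone s := by
      intro n m hnm
      apply Icc_subset_Icc _ le_rfl
      apply div_le_div_of_nonneg_left hb.le (by positivity)
      have : (n:ℝ) ≤ (m:ℝ) := Nat.cast_le.mpr hnm
      linarith
    have hunion : (⋃ n, s n) = Ioc 0 b := by
      ext x
      simp only [mem_iUnion, hs, mem_Icc, mem_Ioc]
      constructor
      · rintro ⟨n, h1, h2⟩
        exact ⟨lt_of_lt_of_le (by positivity) h1, h2⟩
      · rintro ⟨h1, h2⟩
        obtain ⟨n, hn⟩ := exists_nat_gt (b / x)
        refine ⟨n, ?_, h2⟩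
        rw [div_le_iff₀ (by positivity)]
        rw [div_lt_iff₀ h1] at hn
        nlinarith [Nat.cast_nonneg (α := ℝ) n]
    have htend : Tendsto (fun n => ν (s n)) atTop (𝓝 (ν (Ioc 0 b))) := by
      rw [← hunion]
      exact tendsto_measure_iUnion_atTop hmono
    have hval : ∀ n : ℕ, ν (s n) = ENNReal.ofReal (K * (b - b / (n + 2))) := by
      intro n
      exact hIcc _ _ (by positivity) (by
        have h1 : 0 < (n:ℝ) + 2 := by positivity
        rw [div_le_iff₀ h1]
        nlinarith [Nat.cast_nonneg (α := ℝ) n])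
    have htend2 : Tendsto (fun n : ℕ => ν (s n)) atTop (𝓝 (ENNReal.ofReal (K * b))) := by
      have hr : Tendsto (fun n : ℕ => K * (b - b / (n + 2))) atTop (𝓝 (K * b)) := by
        have h2 : Tendsto (fun n : ℕ => ((n:ℝ) + 2)) atTop atTop :=
          Filter.tendsto_atTop_add_const_right _ _ tendsto_natCast_atTop_atTop
        have h3 : Tendsto (fun n : ℕ => b / ((n:ℝ) + 2)) atTop (𝓝 0) :=
          Filter.Tendsto.div_atTop tendsto_const_nhds h2
        have h4 : Tendsto (fun n : ℕ => b - b / ((n:ℝ) + 2)) atTop (𝓝 (b - 0)) :=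
          tendsto_const_nhds.sub h3
        rw [sub_zero] at h4
        exact h4.const_mul K
      exact (ENNReal.continuous_ofReal.tendsto _).comp hr |>.congr
        (fun n => (hval n).symm)
    exact tendsto_nhds_unique htend htend2
  refine Measure.ext_of_Ioc ν _ (fun a b hab => ?_)
  have hRHS : ((ENNReal.ofReal K • volume).restrict (Ioi 0)) (Ioc a b)
      = ENNReal.ofReal K * ENNReal.ofReal (b - max a 0) := by
    rw [Measure.restrict_apply measurableSet_Ioc, Measure.smul_apply, smul_eq_mul,
      Set.Ioc_inter_Ioi, Real.volume_Ioc]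
  rw [hRHS]
  by_cases hb : b ≤ 0
  · have h1 : ν (Ioc a b) = 0 := by
      apply measure_mono_null _ hIic
      intro x hx
      exact le_trans hx.2 hb
    rw [h1]
    have h2 : b - max a 0 ≤ 0 := by
      have := le_max_right a 0
      linarith
    rw [ENNReal.ofReal_eq_zero.mpr h2, mul_zero]
  · push_neg at hb
    by_cases ha : 0 < a
    · rw [hIoc_pos a b ha hab.le, max_eq_left ha.le, ENNReal.ofReal_mul hK]
    · push_neg at ha
      have hsplit : Ioc a b = Ioc a 0 ∪ Ioc 0 b := (Set.Ioc_union_Ioc_eq_Ioc ha hb.le).symm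
      have h1 : ν (Ioc a 0) = 0 :=
        measure_mono_null (fun x hx => hx.2) hIic
      have h2 : ν (Ioc a b) = ν (Ioc 0 b) := by
        apply le_antisymm
        · rw [hsplit]
          calc ν (Ioc a 0 ∪ Ioc 0 b) ≤ ν (Ioc a 0) + ν (Ioc 0 b) := measure_union_le _ _
            _ = ν (Ioc 0 b) := by rw [h1, zero_add]
        · exact measure_mono (Set.Ioc_subset_Ioc (ha) le_rfl)
      rw [h2, hIoc0 b hb, max_eq_right ha, sub_zero, ENNReal.ofReal_mul hK]

lemma side (α : ℝ → ℝ) (hcont : ContinuousOn α (Set.Ici 0))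
    (p : ℝ → ℝ) (hp : ∀ a, p a = Real.exp (-∫ u in (0:ℝ)..a, α u))
    (hpint : IntegrableOn p (Set.Ioi 0))
    (μ : Measure ℝ) [IsFiniteMeasure μ] (hsupp : μ (Set.Iio 0) = 0)
    (K : ℝ) (hK : 0 ≤ K)
    (htest : ∀ f : ℝ → ℝ, ContDiff ℝ 1 f → (∃ C, ∀ a, |f a| ≤ C) →
      (∃ C, ∀ a, |deriv f a| ≤ C) →
      (∫ a, (deriv f a - α a * f a) ∂μ) + K * f 0 = 0) :
    ∀ A : Set ℝ, MeasurableSet A → A ⊆ Set.Ici 0 →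
      (μ A).toReal = K * ∫ a in A, p a := by
  -- continuous extension of α
  set αt : ℝ → ℝ := fun a => α (max a 0) with hαt
  have hαtc : Continuous αt :=
    hcont.comp_continuous (continuous_id.max continuous_const)
      (fun a => le_max_right a 0)
  set E : ℝ → ℝ := fun a => ∫ u in (0:ℝ)..a, αt u with hE
  have hEd : ∀ a, HasDerivAt E (αt a) a := fun a =>
    intervalIntegral.integral_hasDerivAt_right (hαtc.intervalIntegrable _ _)
      (hαtc.stronglyMeasurableAtFilter _ _) hαtc.continuousAt
  have hEc : ContDiff ℝ 1 E := contDiff_one_iff_deriv.mpr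
    ⟨fun x => (hEd x).differentiableAt,
      by rw [show deriv E = αt from funext fun x => (hEd x).deriv]; exact hαtc⟩
  set q : ℝ → ℝ := fun a => Real.exp (E a) with hq
  set pt : ℝ → ℝ := fun a => Real.exp (-(E a)) with hpt
  have hq_pos : ∀ a, 0 < q a := fun a => Real.exp_pos _
  have hpt_pos : ∀ a, 0 < pt a := fun a => Real.exp_pos _
  have hqc : ContDiff ℝ 1 q := hEc.exp
  have hptc : ContDiff ℝ 1 pt := (hEc.neg).exp
  have hqd : ∀ a, HasDerivAt q (Real.exp (E a) * αt a) a := fun a => (hEd a).exp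
  have hE0 : E 0 = 0 := by simp [hE]
  have hq0 : q 0 = 1 := by rw [hq]; simp [hE0]
  have hpt_eq : ∀ a : ℝ, 0 ≤ a → pt a = p a := by
    intro a ha
    rw [hpt, hp]
    have hEeq : E a = ∫ u in (0:ℝ)..a, α u := by
      apply intervalIntegral.integral_congr
      intro u hu
      rw [uIcc_of_le ha] at hu
      simp only [hαt]
      rw [max_eq_left hu.1]
    show rexp (-E a) = rexp (-∫ u in (0:ℝ)..a, α u)
    rw [hEeq]
  have hqm : Measurable (fun a => ENNReal.ofReal (q a)) :=
    ENNReal.measurable_ofReal.comp (hqc.continuous.measurable)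
  have hptm : Measurable (fun a => ENNReal.ofReal (pt a)) :=
    ENNReal.measurable_ofReal.comp (hptc.continuous.measurable)
  set ν : Measure ℝ := μ.withDensity (fun a => ENNReal.ofReal (q a)) with hν
  have hνc : IsFiniteMeasureOnCompacts ν := by
    constructor
    intro s hs
    obtain ⟨C, hC⟩ := hs.exists_bound_of_continuousOn hqc.continuous.continuousOn
    rw [hν, withDensity_apply _ hs.measurableSet]
    calc ∫⁻ a in s, ENNReal.ofReal (q a) ∂μ
        ≤ ∫⁻ _ in s, ENNReal.ofReal C ∂μ := by
          apply setLIntegral_mono measurable_const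
          intro x hx
          exact ENNReal.ofReal_le_ofReal (le_trans (le_abs_self _)
            (by simpa [Real.norm_eq_abs] using hC x hx))
      _ = ENNReal.ofReal C * μ s := by rw [setLIntegral_const]
      _ < ⊤ := ENNReal.mul_lt_top ENNReal.ofReal_lt_top (measure_lt_top μ s)
  have hνsupp : ν (Iio 0) = 0 := by
    rw [hν, withDensity_apply _ measurableSet_Iio,
      Measure.restrict_eq_zero.mpr hsupp, lintegral_zero_measure]
  have hμae : ∀ᵐ a ∂μ, (0:ℝ) ≤ a := by
    rw [ae_iff]; simpa [Set.Iio] using hsupp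
  -- master identity
  have master : ∀ φ : ℝ → ℝ, ContDiff ℝ 1 φ → HasCompactSupport φ →
      ∫ a, deriv φ a ∂ν = -(K * φ 0) := by
    intro φ hφc hφs
    set f : ℝ → ℝ := fun a => φ a * q a with hf
    have hfc : ContDiff ℝ 1 f := hφc.mul hqc
    have hfs : HasCompactSupport f := hφs.mul_right
    have hbd1 : ∃ C, ∀ a, |f a| ≤ C := by
      obtain ⟨C, hC⟩ := hfs.exists_bound_of_continuous hfc.continuous
      exact ⟨C, fun a => by simpa [Real.norm_eq_abs] using hC a⟩
    have hbd2 : ∃ C, ∀ a, |deriv f a| ≤ C := by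
      obtain ⟨C, hC⟩ := (hfs.deriv).exists_bound_of_continuous
        (hfc.continuous_deriv le_rfl)
      exact ⟨C, fun a => by simpa [Real.norm_eq_abs] using hC a⟩
    have hkey := htest f hfc hbd1 hbd2
    have hf0 : f 0 = φ 0 := by rw [hf]; simp [hq0]
    have hfd : ∀ a, HasDerivAt f (deriv φ a * q a + φ a * (Real.exp (E a) * αt a)) a :=
      fun a => ((hφc.differentiable one_ne_zero a).hasDerivAt).mul (hqd a)
    have hcong : ∫ a, (deriv f a - α a * f a) ∂μ = ∫ a, deriv φ a * q a ∂μ := by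
      apply integral_congr_ae
      filter_upwards [hμae] with a ha
      rw [(hfd a).deriv, hf]
      have : αt a = α a := by rw [hαt]; simp [max_eq_left ha]
      rw [this]
      show deriv φ a * q a + φ a * (Real.exp (E a) * α a) - α a * (φ a * q a)
        = deriv φ a * q a
      rw [hq]
      ring
    have hwd : ∫ a, deriv φ a * q a ∂μ = ∫ a, deriv φ a ∂ν := by
      rw [hν]
      have heq : (fun a => ENNReal.ofReal (q a))
          = (fun a => ((q a).toNNReal : ℝ≥0∞)) := rfl
      rw [heq]
      have hm : Measurable (fun a => (q a).toNNReal) :=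
        measurable_real_toNNReal.comp hqc.continuous.measurable
      rw [integral_withDensity_eq_integral_smul hm (fun a => deriv φ a)]
      apply integral_congr_ae
      apply Eventually.of_forall
      intro a
      simp only [NNReal.smul_def, Real.coe_toNNReal _ (hq_pos a).le, smul_eq_mul]
      ring
    rw [hcong, hwd, hf0] at hkey
    linarith
  haveI := hνc
  have hident := smooth_ident ν hνsupp K master
  have hIcc := meas_Icc ν K (fun ψ a b c => hident ψ a b c)
  have hatom := atom_zero ν K master
  have hνeq := key_ext ν K hK hνsupp hatom hIcc
  -- recover μ from ν
  have hμν : μ = ν.withDensity (fun a => ENNReal.ofReal (pt a)) := by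
    rw [hν, ← withDensity_mul μ hqm hptm]
    have heq : ((fun a => ENNReal.ofReal (q a)) * (fun a => ENNReal.ofReal (pt a)))
        = (1 : ℝ → ℝ≥0∞) := by
      funext a
      show ENNReal.ofReal (q a) * ENNReal.ofReal (pt a) = 1
      rw [← ENNReal.ofReal_mul (hq_pos a).le, hq, hpt, ← Real.exp_add]
      simp
    rw [heq, withDensity_one]
  intro A hA hAsub
  have hApply : μ A = ENNReal.ofReal K
      * ∫⁻ a in A ∩ Ioi 0, ENNReal.ofReal (pt a) := by
    rw [hμν, withDensity_apply _ hA, hνeq]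
    rw [Measure.restrict_restrict hA]
    rw [Measure.restrict_smul, lintegral_smul_measure, smul_eq_mul]
  have hfinL : (∫⁻ a in A ∩ Ioi 0, ENNReal.ofReal (pt a)) < ⊤ := by
    calc (∫⁻ a in A ∩ Ioi 0, ENNReal.ofReal (pt a))
        ≤ ∫⁻ a in Ioi 0, ENNReal.ofReal (pt a) :=
          lintegral_mono_set (inter_subset_right)
      _ = ∫⁻ a in Ioi 0, ENNReal.ofReal (p a) := by
          apply setLIntegral_congr_fun measurableSet_Ioi
          intro x hx
          dsimp only
          rw [hpt_eq x (le_of_lt hx)]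
      _ ≤ ∫⁻ a in Ioi 0, (‖p a‖₊ : ℝ≥0∞) := by
          apply lintegral_mono
          intro a
          show ENNReal.ofReal (p a) ≤ (‖p a‖₊ : ℝ≥0∞)
          rw [← enorm_eq_nnnorm, Real.enorm_eq_ofReal_abs]
          exact ENNReal.ofReal_le_ofReal (le_abs_self _)
      _ < ⊤ := hpint.2
  have htoReal : (μ A).toReal
      = K * (∫⁻ a in A ∩ Ioi 0, ENNReal.ofReal (pt a)).toReal := by
    rw [hApply, ENNReal.toReal_mul, ENNReal.toReal_ofReal hK]
  have hL : (∫⁻ a in A ∩ Ioi 0, ENNReal.ofReal (pt a)).toReal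
      = ∫ a in A ∩ Ioi 0, pt a := by
    rw [integral_eq_lintegral_of_nonneg_ae
      (Eventually.of_forall (fun a => (hpt_pos a).le))
      hptc.continuous.aestronglyMeasurable.restrict]
  have hptp : ∫ a in A ∩ Ioi 0, pt a = ∫ a in A ∩ Ioi 0, p a := by
    apply setIntegral_congr_fun (hA.inter measurableSet_Ioi)
    intro x hx
    exact hpt_eq x (le_of_lt hx.2)
  have hAe : (A ∩ Ioi 0 : Set ℝ) =ᵐ[volume] A := by
    apply MeasureTheory.ae_eq_set.mpr
    constructor
    · rw [diff_eq_empty.mpr inter_subset_left]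
      exact measure_empty
    · apply measure_mono_null (t := {(0:ℝ)}) _ volume_singleton
      rintro x ⟨hxA, hxn⟩
      have h1 : (0:ℝ) ≤ x := hAsub hxA
      have h2 : ¬ (0 < x) := fun h => hxn ⟨hxA, h⟩
      have : x = 0 := le_antisymm (not_lt.mp h2) h1
      simpa using this
  have hset : ∫ a in A ∩ Ioi 0, p a = ∫ a in A, p a :=
    setIntegral_congr_set hAe
  rw [htoReal, hL, hptp, hset]


/-- any stationary joint status–age distribution of the alternating
renewal dynamics has densities proportional (with a common constant) to the
survival functions `p_S`, `p_M`. -/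
theorem stationary_two_status_density
    (αS αM : ℝ → ℝ)
    (hαS_cont : ContinuousOn αS (Set.Ici 0)) (hαM_cont : ContinuousOn αM (Set.Ici 0))
    (hαS_nonneg : ∀ a ≥ (0:ℝ), 0 ≤ αS a) (hαM_nonneg : ∀ a ≥ (0:ℝ), 0 ≤ αM a)
    (pS pM : ℝ → ℝ)
    (hpS : ∀ a, pS a = Real.exp (-∫ u in (0:ℝ)..a, αS u))
    (hpM : ∀ a, pM a = Real.exp (-∫ u in (0:ℝ)..a, αM u))
    (hpS_int : IntegrableOn pS (Set.Ioi 0)) (hpM_int : IntegrableOn pM (Set.Ioi 0))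
    (μS μM : Measure ℝ) [IsFiniteMeasure μS] [IsFiniteMeasure μM]
    (hsuppS : μS (Set.Iio 0) = 0) (hsuppM : μM (Set.Iio 0) = 0)
    (hαS_int : Integrable αS μS) (hαM_int : Integrable αM μM)
    (htest : ∀ fS fM : ℝ → ℝ, ContDiff ℝ 1 fS → ContDiff ℝ 1 fM →
        (∃ C, ∀ a, |fS a| ≤ C) → (∃ C, ∀ a, |fM a| ≤ C) →
        (∃ C, ∀ a, |deriv fS a| ≤ C) → (∃ C, ∀ a, |deriv fM a| ≤ C) →
        (∫ a, (deriv fS a + αS a * (fM 0 - fS a)) ∂μS)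
          + ∫ a, (deriv fM a + αM a * (fS 0 - fM a)) ∂μM = 0) :
    ∀ A : Set ℝ, MeasurableSet A → A ⊆ Set.Ici 0 →
      (μS A).toReal
          = ((μS Set.univ).toReal + (μM Set.univ).toReal)
              / ((∫ a in Set.Ioi (0:ℝ), pS a) + ∫ a in Set.Ioi (0:ℝ), pM a)
            * ∫ a in A, pS a
        ∧ (μM A).toReal
          = ((μS Set.univ).toReal + (μM Set.univ).toReal)
              / ((∫ a in Set.Ioi (0:ℝ), pS a) + ∫ a in Set.Ioi (0:ℝ), pM a)
            * ∫ a in A, pM a := by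
  have hμMae : ∀ᵐ a ∂μM, (0:ℝ) ≤ a := by rw [ae_iff]; simpa [Set.Iio] using hsuppM
  have hKMnn : 0 ≤ ∫ a, αM a ∂μM := integral_nonneg_of_ae
    (by filter_upwards [hμMae] with a ha; exact hαM_nonneg a ha)
  have hconst : ∫ a, αS a ∂μS = ∫ a, αM a ∂μM := by
    have h := htest (fun _ => 1) (fun _ => 0) contDiff_const contDiff_const
      ⟨1, fun a => by norm_num⟩ ⟨0, fun a => by norm_num⟩
      ⟨0, fun a => by simp⟩ ⟨0, fun a => by simp⟩
    have e1 : (fun a => deriv (fun _ => (1:ℝ)) a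
        + αS a * ((fun _ => (0:ℝ)) 0 - (fun _ => (1:ℝ)) a))
        = fun a => -(αS a) := by funext a; simp
    have e2 : (fun a => deriv (fun _ => (0:ℝ)) a
        + αM a * ((fun _ => (1:ℝ)) 0 - (fun _ => (0:ℝ)) a))
        = fun a => αM a := by funext a; simp
    rw [e1, e2, integral_neg] at h
    linarith
  have htestS : ∀ f : ℝ → ℝ, ContDiff ℝ 1 f → (∃ C, ∀ a, |f a| ≤ C) →
      (∃ C, ∀ a, |deriv f a| ≤ C) →
      (∫ a, (deriv f a - αS a * f a) ∂μS) + (∫ a, αM a ∂μM) * f 0 = 0 := by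
    intro f hf hb1 hb2
    have h := htest f (fun _ => 0) hf contDiff_const hb1
      ⟨0, fun a => by norm_num⟩ hb2 ⟨0, fun a => by simp⟩
    have e1 : (fun a => deriv f a + αS a * ((fun _ => (0:ℝ)) 0 - f a))
        = fun a => deriv f a - αS a * f a := by funext a; simp; ring
    have e2 : (fun a => deriv (fun _ => (0:ℝ)) a + αM a * (f 0 - (fun _ => (0:ℝ)) a))
        = fun a => αM a * f 0 := by funext a; simp
    rw [e1, e2, integral_mul_const] at h
    linarith
  have htestM : ∀ f : ℝ → ℝ, ContDiff ℝ 1 f → (∃ C, ∀ a, |f a| ≤ C) →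
      (∃ C, ∀ a, |deriv f a| ≤ C) →
      (∫ a, (deriv f a - αM a * f a) ∂μM) + (∫ a, αM a ∂μM) * f 0 = 0 := by
    intro f hf hb1 hb2
    have h := htest (fun _ => 0) f contDiff_const hf
      ⟨0, fun a => by norm_num⟩ hb1 ⟨0, fun a => by simp⟩ hb2
    have e1 : (fun a => deriv (fun _ => (0:ℝ)) a + αS a * (f 0 - (fun _ => (0:ℝ)) a))
        = fun a => αS a * f 0 := by funext a; simp
    have e2 : (fun a => deriv f a + αM a * ((fun _ => (0:ℝ)) 0 - f a))
        = fun a => deriv f a - αM a * f a := by funext a; simp; ring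
    rw [e1, e2, integral_mul_const, hconst] at h
    linarith
  have hS := side αS hαS_cont pS hpS hpS_int μS hsuppS (∫ a, αM a ∂μM) hKMnn htestS
  have hM := side αM hαM_cont pM hpM hpM_int μM hsuppM (∫ a, αM a ∂μM) hKMnn htestM
  set KM : ℝ := ∫ a, αM a ∂μM with hKM
  set IS : ℝ := ∫ a in Set.Ioi (0:ℝ), pS a with hIS
  set IM : ℝ := ∫ a in Set.Ioi (0:ℝ), pM a with hIM
  have hIS_pos : 0 < IS := by
    rw [hIS, setIntegral_pos_iff_support_of_nonneg_ae ?nn hpS_int]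
    · have hsupp_eq : Function.support pS ∩ Ioi 0 = Ioi 0 :=
        inter_eq_right.mpr (fun x _ => by
          rw [Function.mem_support, hpS]; positivity)
      rw [hsupp_eq, Real.volume_Ioi]
      norm_num
    case nn =>
      filter_upwards with a
      rw [hpS]; positivity
  have hIM_nonneg : 0 ≤ IM := setIntegral_nonneg measurableSet_Ioi
    (fun a _ => by rw [hpM]; positivity)
  have hIci_Ioi_S : ∫ a in Set.Ici (0:ℝ), pS a = IS :=
    setIntegral_congr_set Ioi_ae_eq_Ici.symm
  have hIci_Ioi_M : ∫ a in Set.Ici (0:ℝ), pM a = IM :=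
    setIntegral_congr_set Ioi_ae_eq_Ici.symm
  have huniv : ∀ (μ : Measure ℝ), μ (Set.Iio 0) = 0 → μ Set.univ = μ (Set.Ici 0) := by
    intro μ h0
    apply le_antisymm _ (measure_mono (subset_univ _))
    calc μ Set.univ = μ (Set.Ici 0 ∪ Set.Iio 0) := by rw [Set.union_comm, Set.Iio_union_Ici]
      _ ≤ μ (Set.Ici 0) + μ (Set.Iio 0) := measure_union_le _ _
      _ = μ (Set.Ici 0) := by rw [h0, add_zero]
  have hμSuniv : (μS Set.univ).toReal = KM * IS := by
    rw [huniv μS hsuppS, hS (Set.Ici 0) measurableSet_Ici (subset_refl _), hIci_Ioi_S]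
  have hμMuniv : (μM Set.univ).toReal = KM * IM := by
    rw [huniv μM hsuppM, hM (Set.Ici 0) measurableSet_Ici (subset_refl _), hIci_Ioi_M]
  have hc : ((μS Set.univ).toReal + (μM Set.univ).toReal) / (IS + IM) = KM := by
    rw [hμSuniv, hμMuniv, ← mul_add, mul_div_assoc,
      div_self (by positivity : IS + IM ≠ 0), mul_one]
  intro A hA hAsub
  constructor
  · rw [hS A hA hAsub, hc]
  · rw [hM A hA hAsub, hc]
end
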